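/- Let n ≥ 1, t₁ > 0 and c > 0. Let λ₁,…,λₙ : [t₁,∞) → ℂ be continuous with λₙ ≡ 0 and Re λⱼ(t) ≥ 0 for all t ≥ t₁ and all j < n, and let R : [t₁,∞) → Matrix(n,n,ℂ) be continuous with ‖R(t)‖ ≤ c/t² for all t ≥ t₁. Then there exist a constant C > 0 and a differentiable function w : [t₁,∞) → ℂⁿ solving w′(t) = (Λ(t) + R(t))·w(t), where Λ(t) = diag(λ₁(t),…,λₙ(t)), such that for all t ≥ t₁: |wₙ(t) − 1| ≤ C/t and |wⱼ(t)| ≤ C/t for every j < n. In particular w(t) → (0,…,0,1)ᵀ as t → ∞. -/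

import Mathlib

/-!
Variation of constants turns the system into the integral equation
`w j t = e j - E j t * ∫ s in Ioi t, (R s *ᵥ w s) j / E j s` with `E j t = exp ∫_{t₁}^t λ_j` and
`e` the last basis vector, which solves the unperturbed system because `λₙ = 0`. As `Re λ_j ≥ 0`,
the kernel `E j t / E j s` has modulus at most `1` for `s ≥ t`, so by `‖R s‖ ≤ c / s²` the `k`-th
iterate of the integral operator moves distances by at most `(c / t) ^ k / k!`. Some iterate is
therefore a contraction on bounded continuous functions, its fixed point is the solution, and one
more application of the operator gives `‖w t - e‖ ≤ C / t`.
-/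

open MeasureTheory Set Filter Topology
open scoped Matrix BoundedContinuousFunction

noncomputable def picardBound (D c : ℝ) (k : ℕ) (s : ℝ) : ℝ := D * (c / s) ^ k / k.factorial

@[simp] lemma picardBound_zero (D c s : ℝ) : picardBound D c 0 s = D := by
  simp [picardBound]

lemma picardBound_one (D c s : ℝ) : picardBound D c 1 s = D * c / s := by
  simp [picardBound, mul_div_assoc]

lemma picardBound_nonneg {D c : ℝ} (hD : 0 ≤ D) (hc : 0 ≤ c) (k : ℕ) {s : ℝ} (hs : 0 ≤ s) :
    0 ≤ picardBound D c k s := by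
  unfold picardBound; positivity

lemma hasDerivAt_neg_picardBound_succ (D c : ℝ) (k : ℕ) {s : ℝ} (hs : s ≠ 0) :
    HasDerivAt (fun s => -picardBound D c (k + 1) s) (c / s ^ 2 * picardBound D c k s) s := by
  have hdiv : HasDerivAt (fun s => c / s) (-(c / s ^ 2)) s := by
    simpa [div_eq_mul_inv] using (hasDerivAt_inv hs).const_mul c
  refine (((hdiv.pow (k + 1)).const_mul D).div_const ((k + 1).factorial : ℝ)).neg.congr_deriv ?_
  simp only [picardBound, Nat.factorial_succ]
  push_cast
  field_simp

lemma integral_Ioi_picardBound {D c : ℝ} (hD : 0 ≤ D) (hc : 0 ≤ c) (k : ℕ) {τ : ℝ}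
    (hτ : 0 < τ) :
    IntegrableOn (fun s => c / s ^ 2 * picardBound D c k s) (Ioi τ) ∧
      ∫ s in Ioi τ, c / s ^ 2 * picardBound D c k s = picardBound D c (k + 1) τ := by
  have hderiv : ∀ s ∈ Ici τ, HasDerivAt (fun s => -picardBound D c (k + 1) s)
      (c / s ^ 2 * picardBound D c k s) s := fun s hs =>
    hasDerivAt_neg_picardBound_succ D c k (hτ.trans_le hs).ne'
  have hnonneg : ∀ s ∈ Ioi τ, 0 ≤ c / s ^ 2 * picardBound D c k s := fun s hs =>
    mul_nonneg (by positivity) (picardBound_nonneg hD hc k (hτ.trans hs).le)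
  have hlim : Tendsto (fun s => -picardBound D c (k + 1) s) atTop (𝓝 0) := by
    have : Tendsto (fun s : ℝ => c / s) atTop (𝓝 0) := tendsto_const_nhds.div_atTop tendsto_id
    simpa [picardBound] using ((this.pow (k + 1)).const_mul D).div_const _ |>.neg
  refine ⟨integrableOn_Ioi_deriv_of_nonneg' hderiv hnonneg hlim, ?_⟩
  rw [integral_Ioi_of_hasDerivAt_of_nonneg' hderiv hnonneg hlim]
  ring

noncomputable def integratingFactor (μ : ℝ → ℂ) (a t : ℝ) : ℂ := Complex.exp (∫ s in a..t, μ s)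

section IntegratingFactor

variable {μ : ℝ → ℂ} {a : ℝ}

@[simp] lemma integratingFactor_self (μ : ℝ → ℂ) (a : ℝ) : integratingFactor μ a a = 1 := by
  simp [integratingFactor]

lemma integratingFactor_ne_zero (μ : ℝ → ℂ) (a t : ℝ) : integratingFactor μ a t ≠ 0 :=
  Complex.exp_ne_zero _

lemma hasDerivAt_integratingFactor (hμ : Continuous μ) (a t : ℝ) :
    HasDerivAt (integratingFactor μ a) (μ t * integratingFactor μ a t) t := by
  rw [mul_comm]
  exact (intervalIntegral.integral_hasDerivAt_right (hμ.intervalIntegrable _ _)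
    (hμ.stronglyMeasurableAtFilter _ _) hμ.continuousAt).cexp

lemma continuous_integratingFactor (hμ : Continuous μ) (a : ℝ) :
    Continuous (integratingFactor μ a) :=
  continuous_iff_continuousAt.2 fun t => (hasDerivAt_integratingFactor hμ a t).continuousAt

lemma monotone_norm_integratingFactor (hμ : Continuous μ) (hre : ∀ s, 0 ≤ (μ s).re) (a : ℝ) :
    Monotone fun t => ‖integratingFactor μ a t‖ := by
  have hcont : Continuous fun s => (μ s).re := Complex.continuous_re.comp hμ
  have hmono : Monotone fun t => ∫ s in a..t, (μ s).re :=
    monotone_of_hasDerivAt_nonneg (fun t => intervalIntegral.integral_hasDerivAt_right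
      (hcont.intervalIntegrable _ _) (hcont.stronglyMeasurableAtFilter _ _) hcont.continuousAt) hre
  intro t t' htt'
  have hre_int : ∀ t, (∫ s in a..t, μ s).re = ∫ s in a..t, (μ s).re := fun t =>
    (intervalIntegral.intervalIntegral_re (hμ.intervalIntegrable a t)).symm
  simpa only [integratingFactor, Complex.norm_exp, hre_int] using Real.exp_le_exp.2 (hmono htt')

lemma one_le_norm_integratingFactor (hμ : Continuous μ) (hre : ∀ s, 0 ≤ (μ s).re) {t : ℝ}
    (ht : a ≤ t) : 1 ≤ ‖integratingFactor μ a t‖ := by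
  simpa using monotone_norm_integratingFactor hμ hre a ht

end IntegratingFactor

section TailIntegral

variable {E : Type*} [NormedAddCommGroup E] {h : ℝ → E}

lemma Continuous.integrableOn_Ioi (hh : Continuous h) (hint : IntegrableAtFilter h atTop)
    (u : ℝ) : IntegrableOn h (Ioi u) :=
  (integrableOn_Ici_iff_integrableAtFilter_atTop.2
    ⟨hint, hh.locallyIntegrable.locallyIntegrableOn _⟩).mono_set Ioi_subset_Ici_self

lemma hasDerivAt_integral_Ioi [NormedSpace ℝ E] [CompleteSpace E] (hh : Continuous h)
    (hint : IntegrableAtFilter h atTop) (t : ℝ) :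
    HasDerivAt (fun u => ∫ s in Ioi u, h s) (-h t) t := by
  have hsplit : (fun u => ∫ s in Ioi u, h s) = fun u => (∫ s in Ioi t, h s) - ∫ s in t..u, h s :=
    funext fun u => by
      rw [← intervalIntegral.integral_Ioi_sub_Ioi' (hh.integrableOn_Ioi hint t)
        (hh.integrableOn_Ioi hint u), sub_sub_cancel]
  rw [hsplit]
  exact (intervalIntegral.integral_hasDerivAt_right (hh.intervalIntegrable _ _)
    (hh.stronglyMeasurableAtFilter _ _) hh.continuousAt).const_sub _

end TailIntegral

structure IsLevinsonSystem {ι : Type*} [Fintype ι] (a c : ℝ) (μ : ι → ℝ → ℂ)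
    (B : ℝ → Matrix ι ι ℂ) : Prop where
  pos : 0 < a
  nonneg : 0 ≤ c
  continuous_μ : ∀ j, Continuous (μ j)
  re_nonneg : ∀ j s, 0 ≤ (μ j s).re
  continuous_B : Continuous B
  norm_mulVec_le : ∀ s, a ≤ s → ∀ v, ‖B s *ᵥ v‖ ≤ c / s ^ 2 * ‖v‖

noncomputable def levinsonIntegrand {ι : Type*} [Fintype ι] (a : ℝ) (μ : ι → ℝ → ℂ)
    (B : ℝ → Matrix ι ι ℂ) (v : ℝ → ι → ℂ) (j : ι) (s : ℝ) : ℂ :=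
  (B s *ᵥ v s) j / integratingFactor (μ j) a s

noncomputable def levinsonTail {ι : Type*} [Fintype ι] (a : ℝ) (μ : ι → ℝ → ℂ)
    (B : ℝ → Matrix ι ι ℂ) (v : ℝ → ι → ℂ) (t : ℝ) (j : ι) : ℂ :=
  integratingFactor (μ j) a t * ∫ s in Ioi t, levinsonIntegrand a μ B v j s

namespace IsLevinsonSystem

variable {ι : Type*} [Fintype ι] {a c : ℝ} {μ : ι → ℝ → ℂ} {B : ℝ → Matrix ι ι ℂ}
  {v : ℝ → ι → ℂ} {D : ℝ}

lemma continuous_levinsonIntegrand (hL : IsLevinsonSystem a c μ B) (hv : Continuous v) (j : ι) :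
    Continuous (levinsonIntegrand a μ B v j) :=
  ((continuous_apply j).comp (hL.continuous_B.matrix_mulVec hv)).div
    (continuous_integratingFactor (hL.continuous_μ j) a) (integratingFactor_ne_zero _ a)

lemma norm_integratingFactor_mul_levinsonIntegrand_le (hL : IsLevinsonSystem a c μ B)
    (j : ι) {τ s : ℝ} (hτ : a ≤ τ) (hτs : τ ≤ s) :
    ‖integratingFactor (μ j) a τ * levinsonIntegrand a μ B v j s‖ ≤ c / s ^ 2 * ‖v s‖ := by
  have hF := one_le_norm_integratingFactor (hL.continuous_μ j) (hL.re_nonneg j) (hτ.trans hτs)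
  calc ‖integratingFactor (μ j) a τ * levinsonIntegrand a μ B v j s‖
      ≤ ‖integratingFactor (μ j) a s‖ * ‖levinsonIntegrand a μ B v j s‖ := by
        rw [norm_mul]
        gcongr
        exact monotone_norm_integratingFactor (hL.continuous_μ j) (hL.re_nonneg j) a hτs
    _ = ‖(B s *ᵥ v s) j‖ := by
        rw [levinsonIntegrand, norm_div, mul_div_cancel₀ _ (by positivity)]
    _ ≤ c / s ^ 2 * ‖v s‖ := (norm_le_pi_norm _ j).trans (hL.norm_mulVec_le s (hτ.trans hτs) _)

lemma norm_levinsonTail_le (hL : IsLevinsonSystem a c μ B) {k : ℕ} (hD : 0 ≤ D)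
    (hv : ∀ s, a ≤ s → ‖v s‖ ≤ picardBound D c k s) {τ : ℝ} (hτ : a ≤ τ) :
    ‖levinsonTail a μ B v τ‖ ≤ picardBound D c (k + 1) τ := by
  have hτ0 : 0 < τ := hL.pos.trans_le hτ
  obtain ⟨hint, hintegral⟩ := integral_Ioi_picardBound hD hL.nonneg k hτ0
  refine (pi_norm_le_iff_of_nonneg (picardBound_nonneg hD hL.nonneg _ hτ0.le)).2 fun j => ?_
  rw [levinsonTail, ← integral_const_mul, ← hintegral]
  refine norm_integral_le_of_norm_le hint ((ae_restrict_iff' measurableSet_Ioi).2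
    (ae_of_all _ fun s hs => ?_))
  have hτs : τ ≤ s := le_of_lt hs
  exact (hL.norm_integratingFactor_mul_levinsonIntegrand_le j hτ hτs).trans
    (mul_le_mul_of_nonneg_left (hv s (hτ.trans hτs)) (div_nonneg hL.nonneg (sq_nonneg s)))

lemma integrableOn_levinsonIntegrand (hL : IsLevinsonSystem a c μ B) (hv : Continuous v)
    (hD : 0 ≤ D) (hvD : ∀ s, a ≤ s → ‖v s‖ ≤ D) (j : ι) :
    IntegrableOn (levinsonIntegrand a μ B v j) (Ioi a) := by
  refine Integrable.mono' (integral_Ioi_picardBound hD hL.nonneg 0 hL.pos).1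
    (hL.continuous_levinsonIntegrand hv j).aestronglyMeasurable
    ((ae_restrict_iff' measurableSet_Ioi).2 (ae_of_all _ fun s hs => ?_))
  have h := hL.norm_integratingFactor_mul_levinsonIntegrand_le (v := v) j le_rfl (le_of_lt hs)
  rw [integratingFactor_self, one_mul] at h
  simpa using h.trans (mul_le_mul_of_nonneg_left (hvD s (le_of_lt hs))
    (div_nonneg hL.nonneg (sq_nonneg s)))

lemma hasDerivAt_levinsonTail (hL : IsLevinsonSystem a c μ B) (hv : Continuous v) (hD : 0 ≤ D)
    (hvD : ∀ s, a ≤ s → ‖v s‖ ≤ D) (j : ι) (t : ℝ) :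
    HasDerivAt (fun u => levinsonTail a μ B v u j)
      (μ j t * levinsonTail a μ B v t j - (B t *ᵥ v t) j) t := by
  have hcont := hL.continuous_levinsonIntegrand hv j
  have htail := hasDerivAt_integral_Ioi hcont
    ⟨Ioi a, Ioi_mem_atTop a, hL.integrableOn_levinsonIntegrand hv hD hvD j⟩ t
  refine ((hasDerivAt_integratingFactor (hL.continuous_μ j) a t).mul htail).congr_deriv ?_
  rw [levinsonTail, levinsonIntegrand, mul_neg, mul_div_cancel₀ _ (integratingFactor_ne_zero _ a t)]
  ring

lemma continuous_levinsonTail (hL : IsLevinsonSystem a c μ B) (hv : Continuous v) (hD : 0 ≤ D)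
    (hvD : ∀ s, a ≤ s → ‖v s‖ ≤ D) : Continuous (levinsonTail a μ B v) :=
  continuous_pi fun j => continuous_iff_continuousAt.2 fun t =>
    (hL.hasDerivAt_levinsonTail hv hD hvD j t).continuousAt

lemma levinsonTail_sub (hL : IsLevinsonSystem a c μ B) {v' : ℝ → ι → ℂ} {D' : ℝ}
    (hv : Continuous v) (hv' : Continuous v') (hD : 0 ≤ D) (hD' : 0 ≤ D')
    (hvD : ∀ s, a ≤ s → ‖v s‖ ≤ D) (hv'D : ∀ s, a ≤ s → ‖v' s‖ ≤ D') {τ : ℝ} (hτ : a ≤ τ) :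
    levinsonTail a μ B v τ - levinsonTail a μ B v' τ = levinsonTail a μ B (v - v') τ := by
  ext j
  have hint := (hL.integrableOn_levinsonIntegrand hv hD hvD j).mono_set (Ioi_subset_Ioi hτ)
  have hint' := (hL.integrableOn_levinsonIntegrand hv' hD' hv'D j).mono_set (Ioi_subset_Ioi hτ)
  rw [Pi.sub_apply, levinsonTail, levinsonTail, levinsonTail, ← mul_sub, ← integral_sub hint hint']
  simp only [levinsonIntegrand, Pi.sub_apply, Matrix.mulVec_sub, sub_div]

lemma norm_levinsonTail_le_norm_mul_div (hL : IsLevinsonSystem a c μ B) (w : ℝ →ᵇ (ι → ℂ)) {τ : ℝ}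
    (hτ : a ≤ τ) : ‖levinsonTail a μ B w τ‖ ≤ ‖w‖ * c / τ := by
  simpa only [zero_add, picardBound_one] using hL.norm_levinsonTail_le (k := 0) (norm_nonneg w)
    (fun s _ => by simpa using w.norm_coe_le_norm s) hτ

/-- Evaluating the tail at `max t a` extends the image constantly to the left of `a`, so that it
is again a bounded continuous function on `ℝ`. -/
noncomputable def levinsonMap (hL : IsLevinsonSystem a c μ B) (e : ι → ℂ)
    (w : ℝ →ᵇ (ι → ℂ)) : ℝ →ᵇ (ι → ℂ) :=
  .ofNormedAddCommGroup (fun t => e - levinsonTail a μ B w (max t a))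
    (continuous_const.sub ((hL.continuous_levinsonTail w.continuous (norm_nonneg w)
      fun s _ => w.norm_coe_le_norm s).comp (continuous_id.max continuous_const)))
    (‖e‖ + ‖w‖ * c / a) fun t => by
      refine (norm_sub_le _ _).trans (add_le_add_right ?_ _)
      refine (hL.norm_levinsonTail_le_norm_mul_div w (le_max_right t a)).trans ?_
      have := mul_nonneg (norm_nonneg w) hL.nonneg
      gcongr
      · exact hL.pos
      · exact le_max_right t a

lemma levinsonMap_apply (hL : IsLevinsonSystem a c μ B) (e : ι → ℂ) (w : ℝ →ᵇ (ι → ℂ)) (t : ℝ) :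
    hL.levinsonMap e w t = e - levinsonTail a μ B w (max t a) := rfl

lemma dist_iterate_levinsonMap_le (hL : IsLevinsonSystem a c μ B) (e : ι → ℂ) (k : ℕ)
    (w w' : ℝ →ᵇ (ι → ℂ)) (t : ℝ) :
    dist ((hL.levinsonMap e)^[k] w t) ((hL.levinsonMap e)^[k] w' t) ≤
      picardBound (dist w w') c k (max t a) := by
  induction k generalizing t with
  | zero => simpa using w.dist_coe_le_dist t
  | succ k ih =>
    set u := (hL.levinsonMap e)^[k] w
    set u' := (hL.levinsonMap e)^[k] w'
    have hdiff : ∀ s, a ≤ s → ‖(⇑u - ⇑u') s‖ ≤ picardBound (dist w w') c k s := fun s hs => by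
      simpa [max_eq_left hs, dist_eq_norm] using ih s
    rw [Function.iterate_succ_apply', Function.iterate_succ_apply', levinsonMap_apply,
      levinsonMap_apply, dist_eq_norm, sub_sub_sub_cancel_left, norm_sub_rev,
      hL.levinsonTail_sub u.continuous u'.continuous (norm_nonneg u) (norm_nonneg u')
        (fun s _ => u.norm_coe_le_norm s) (fun s _ => u'.norm_coe_le_norm s) (le_max_right t a)]
    exact hL.norm_levinsonTail_le dist_nonneg hdiff (le_max_right t a)

lemma exists_isFixedPt_levinsonMap (hL : IsLevinsonSystem a c μ B) (e : ι → ℂ) :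
    ∃ x, Function.IsFixedPt (hL.levinsonMap e) x := by
  obtain ⟨m, hm⟩ : ∃ m : ℕ, (c / a) ^ m / m.factorial < 1 :=
    ((FloorSemiring.tendsto_pow_div_factorial_atTop (c / a)).eventually
      (gt_mem_nhds one_pos)).exists
  have hK : 0 ≤ (c / a) ^ m / m.factorial := by have := hL.pos.le; have := hL.nonneg; positivity
  have hcontr : ContractingWith ⟨_, hK⟩ (hL.levinsonMap e)^[m] := by
    refine ⟨hm, LipschitzWith.of_dist_le_mul fun w w' =>
      (BoundedContinuousFunction.dist_le (by positivity)).2 fun t => ?_⟩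
    refine (hL.dist_iterate_levinsonMap_le e m w w' t).trans ?_
    show _ ≤ (c / a) ^ m / m.factorial * dist w w'
    rw [picardBound, mul_comm, mul_div_right_comm]
    have := hL.nonneg
    have := hL.pos.trans_le (le_max_right t a)
    gcongr
    · exact hL.pos
    · exact le_max_right t a
  exact ⟨_, hcontr.isFixedPt_fixedPoint_iterate⟩

lemma eq_sub_levinsonTail_of_isFixedPt (hL : IsLevinsonSystem a c μ B) {e : ι → ℂ}
    {x : ℝ →ᵇ (ι → ℂ)} (hx : Function.IsFixedPt (hL.levinsonMap e) x) {t : ℝ} (ht : a ≤ t) :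
    x t = e - levinsonTail a μ B x t := by
  conv_lhs => rw [← hx]
  rw [levinsonMap_apply, max_eq_left ht]

lemma hasDerivWithinAt_of_isFixedPt [DecidableEq ι] (hL : IsLevinsonSystem a c μ B)
    {e : ι → ℂ} (he : ∀ j t, μ j t * e j = 0) {x : ℝ →ᵇ (ι → ℂ)}
    (hx : Function.IsFixedPt (hL.levinsonMap e) x) {t : ℝ} (ht : a ≤ t) :
    HasDerivWithinAt x ((Matrix.diagonal (fun j => μ j t) + B t) *ᵥ x t) (Ici a) t := by
  refine hasDerivWithinAt_pi.2 fun j => ?_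
  have hxj : ∀ u ∈ Ici a, x u j = e j - levinsonTail a μ B x u j := fun u hu =>
    congrFun (hL.eq_sub_levinsonTail_of_isFixedPt hx hu) j
  refine (((hL.hasDerivAt_levinsonTail x.continuous (norm_nonneg x)
    (fun s _ => x.norm_coe_le_norm s) j t).const_sub (e j)).hasDerivWithinAt.congr hxj
    (hxj t ht)).congr_deriv ?_
  simp only [Matrix.add_mulVec, Matrix.mulVec_diagonal, Pi.add_apply, hxj t ht]
  linear_combination -he j t

lemma norm_sub_le_of_isFixedPt (hL : IsLevinsonSystem a c μ B) {e : ι → ℂ}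
    {x : ℝ →ᵇ (ι → ℂ)} (hx : Function.IsFixedPt (hL.levinsonMap e) x) {t : ℝ} (ht : a ≤ t) :
    ‖x t - e‖ ≤ ‖x‖ * c / t := by
  rw [hL.eq_sub_levinsonTail_of_isFixedPt hx ht, sub_sub_cancel_left, norm_neg]
  exact hL.norm_levinsonTail_le_norm_mul_div x ht

theorem exists_solution [DecidableEq ι] (hL : IsLevinsonSystem a c μ B) {e : ι → ℂ}
    (he : ∀ j t, μ j t * e j = 0) :
    ∃ C > 0, ∃ w : ℝ → ι → ℂ,
      (∀ t ∈ Ici a, HasDerivWithinAt w ((Matrix.diagonal (fun j => μ j t) + B t) *ᵥ w t)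
        (Ici a) t) ∧
      (∀ t ∈ Ici a, ‖w t - e‖ ≤ C / t) ∧ Tendsto w atTop (𝓝 e) := by
  obtain ⟨x, hx⟩ := hL.exists_isFixedPt_levinsonMap e
  have hC : 0 < ‖x‖ * c + 1 := by have := mul_nonneg (norm_nonneg x) hL.nonneg; linarith
  have hbound : ∀ t ∈ Ici a, ‖x t - e‖ ≤ (‖x‖ * c + 1) / t := fun t ht =>
    (hL.norm_sub_le_of_isFixedPt hx ht).trans
      (by gcongr; exacts [(hL.pos.trans_le ht).le, le_add_of_nonneg_right zero_le_one])
  refine ⟨_, hC, x, fun t ht => hL.hasDerivWithinAt_of_isFixedPt he hx ht, hbound, ?_⟩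
  refine tendsto_iff_norm_sub_tendsto_zero.2 (squeeze_zero' (.of_forall fun _ => norm_nonneg _)
    ?_ (tendsto_const_nhds.div_atTop tendsto_id : Tendsto (fun t => (‖x‖ * c + 1) / t) _ _))
  filter_upwards [eventually_ge_atTop a] with t ht using hbound t ht

end IsLevinsonSystem

lemma isLevinsonSystem_comp_max {ι : Type*} [Fintype ι] {a c : ℝ} {lam : ι → ℝ → ℂ}
    {R : ℝ → Matrix ι ι ℂ} (ha : 0 < a) (hc : 0 ≤ c) (hlam : ∀ j, ContinuousOn (lam j) (Ici a))
    (hre : ∀ t ∈ Ici a, ∀ j, 0 ≤ (lam j t).re) (hR : ContinuousOn R (Ici a))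
    (hRle : ∀ t ∈ Ici a, ∀ v, ‖R t *ᵥ v‖ ≤ c / t ^ 2 * ‖v‖) :
    IsLevinsonSystem a c (fun j s => lam j (max s a)) (fun s => R (max s a)) := by
  have hmax : Continuous fun s : ℝ => max s a := continuous_id.max continuous_const
  have hmem : ∀ s, max s a ∈ Ici a := fun s => le_max_right s a
  exact
    { pos := ha
      nonneg := hc
      continuous_μ := fun j => (hlam j).comp_continuous hmax hmem
      re_nonneg := fun j s => hre _ (hmem s) j
      continuous_B := hR.comp_continuous hmax hmem
      norm_mulVec_le := fun s hs v => by simpa only [max_eq_left hs] using hRle s hs v }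

/-- Levinson-type asymptotic integration theorem: if `Λ(t) = diag(λ₁(t),…,λₙ(t))` with
`λₙ ≡ 0` and `Re λⱼ(t) ≥ 0` for `j < n`, and `R(t)` is a continuous matrix perturbation
with operator norm at most `c/t²`, then the system `w′ = (Λ + R)w` has a solution on
`[t₁,∞)` with `|wₙ(t) − 1| ≤ C/t` and `|wⱼ(t)| ≤ C/t` for `j < n`; in particular
`w(t) → eₙ` as `t → ∞`. -/
theorem stmt13 (n : ℕ) (hn : 1 ≤ n) (t₁ c : ℝ) (ht₁ : 0 < t₁) (hc : 0 < c)
    (lam : Fin n → ℝ → ℂ)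
    (hlamcont : ∀ j : Fin n, ContinuousOn (lam j) (Set.Ici t₁))
    (hlamn : ∀ t : ℝ, lam ⟨n - 1, by omega⟩ t = 0)
    (hlamre : ∀ t ∈ Set.Ici t₁, ∀ j : Fin n, (j : ℕ) < n - 1 → 0 ≤ (lam j t).re)
    (R : ℝ → Matrix (Fin n) (Fin n) ℂ)
    (hRcont : ContinuousOn R (Set.Ici t₁))
    (hRnorm : ∀ t ∈ Set.Ici t₁, ∀ v : Fin n → ℂ, ‖(R t).mulVec v‖ ≤ c / t ^ 2 * ‖v‖) :
    ∃ C > 0, ∃ w : ℝ → Fin n → ℂ,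
      (∀ t ∈ Set.Ici t₁, HasDerivWithinAt w
        ((Matrix.diagonal (fun j => lam j t) + R t).mulVec (w t)) (Set.Ici t₁) t) ∧
      (∀ t ∈ Set.Ici t₁,
        ‖w t ⟨n - 1, by omega⟩ - 1‖ ≤ C / t ∧
        ∀ j : Fin n, (j : ℕ) < n - 1 → ‖w t j‖ ≤ C / t) ∧
      Filter.Tendsto w Filter.atTop
        (nhds fun j : Fin n => if (j : ℕ) = n - 1 then 1 else 0) := by
  have hlast : ∀ j : Fin n, (j : ℕ) = n - 1 → ∀ t, lam j t = 0 := fun j hj t => by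
    rw [show j = ⟨n - 1, by omega⟩ from Fin.ext hj, hlamn]
  have hre : ∀ t ∈ Ici t₁, ∀ j : Fin n, 0 ≤ (lam j t).re := fun t ht j => by
    rcases (Nat.le_sub_one_of_lt j.isLt).lt_or_eq with hj | hj
    · exact hlamre t ht j hj
    · simp [hlast j hj]
  obtain ⟨C, hC, w, hode, hbound, hlim⟩ :=
    (isLevinsonSystem_comp_max ht₁ hc.le hlamcont hre hRcont hRnorm).exists_solution
      (e := fun j : Fin n => if (j : ℕ) = n - 1 then 1 else 0) fun j t => by
        split_ifs with hj
        · rw [hlast j hj, zero_mul]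
        · rw [mul_zero]
  refine ⟨C, hC, w, fun t ht => ?_, fun t ht => ⟨?_, fun j hj => ?_⟩, hlim⟩
  · simpa only [max_eq_left (show t₁ ≤ t from ht)] using hode t ht
  · simpa using (norm_le_pi_norm _ ⟨n - 1, by omega⟩).trans (hbound t ht)
  · simpa [hj.ne] using (norm_le_pi_norm _ j).trans (hbound t ht)
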